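/- If T is an induced SPN of a complete and decomposable SPN S, then T is a tree (i.e., every node of T other than the root of S has exactly one parent in T), and T is itself a complete and decomposable SPN. -/
import Mathlib


inductive NodeKind
  | sum
  | prod
  | leaf
deriving DecidableEq

/-- A sum-product network over `N` Boolean variables, with node set `V`:
a rooted DAG (acyclicity witnessed by a rank function) whose leaves are
indicator variables and whose internal nodes are sum or product nodes. -/
structure SPN (V : Type) [Fintype V] [DecidableEq V] (N : ℕ) where
  root : V
  kind : V → NodeKind
  children : V → Finset V
  leaf_children : ∀ v, kind v = NodeKind.leaf → children v = ∅
  internal_nonempty : ∀ v, kind v ≠ NodeKind.leaf → (children v).Nonempty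
  root_no_parent : ∀ u, root ∉ children u
  leafVar : V → Fin N
  leafSign : V → Bool
  rank : V → ℕ
  rank_lt : ∀ v, ∀ u ∈ children v, rank u < rank v

namespace SPN

variable {V : Type} [Fintype V] [DecidableEq V] {N : ℕ}

/-- The value `f_v(·|w)` of every node, where `w` assigns a weight to every
edge `(v,u)` out of a sum node and `L` gives the value of every leaf. -/
noncomputable def evalWith (S : SPN V N) (w : V × V → ℝ) (L : V → ℝ) (v : V) : ℝ :=
  match S.kind v with
  | NodeKind.leaf => L v
  | NodeKind.sum => ∑ u ∈ (S.children v).attach, w (v, u.1) * S.evalWith w L u.1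
  | NodeKind.prod => ∏ u ∈ (S.children v).attach, S.evalWith w L u.1
termination_by S.rank v
decreasing_by
  · exact S.rank_lt v u.1 u.2
  · exact S.rank_lt v u.1 u.2

/-- The leaf values determined by an input `x ∈ {0,1}^N`: the leaf over
variable `X_n` is the indicator `I[x_n = leafSign]`. -/
def ind (S : SPN V N) (x : Fin N → Bool) (v : V) : ℝ :=
  if x (S.leafVar v) = S.leafSign v then 1 else 0

/-- The scope of a node: its variable at a leaf, the union of the scopes of
the children at an internal node. -/
noncomputable def scope (S : SPN V N) (v : V) : Finset (Fin N) :=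
  match S.kind v with
  | NodeKind.leaf => {S.leafVar v}
  | NodeKind.sum => (S.children v).attach.sup fun u => S.scope u.1
  | NodeKind.prod => (S.children v).attach.sup fun u => S.scope u.1
termination_by S.rank v
decreasing_by
  · exact S.rank_lt v u.1 u.2
  · exact S.rank_lt v u.1 u.2

/-- An SPN is complete if all children of every sum node have the same scope. -/
def Complete (S : SPN V N) : Prop :=
  ∀ v, S.kind v = NodeKind.sum →
    ∀ u₁ ∈ S.children v, ∀ u₂ ∈ S.children v, S.scope u₁ = S.scope u₂

/-- An SPN is decomposable if the children of every product node have
pairwise disjoint scopes. -/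
def Decomposable (S : SPN V N) : Prop :=
  ∀ v, S.kind v = NodeKind.prod →
    ∀ u₁ ∈ S.children v, ∀ u₂ ∈ S.children v, u₁ ≠ u₂ →
      Disjoint (S.scope u₁) (S.scope u₂)

/-- `(TV, TE)` is an induced SPN (induced tree) of `S`: a subgraph of `S`,
generated from the root, containing exactly one child of every sum node it
contains and all children of every product node it contains, together with
the corresponding edges. -/
structure IsInducedTree (S : SPN V N) (TV : Finset V) (TE : Finset (V × V)) : Prop where
  root_mem : S.root ∈ TV
  edges_sub : ∀ e ∈ TE, e.1 ∈ TV ∧ e.2 ∈ TV ∧ e.2 ∈ S.children e.1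
  reach : ∀ v ∈ TV, v ≠ S.root → ∃ u, (u, v) ∈ TE
  sum_unique : ∀ v ∈ TV, S.kind v = NodeKind.sum → ∃! u, u ∈ S.children v ∧ u ∈ TV
  sum_edge : ∀ v ∈ TV, S.kind v = NodeKind.sum → ∀ u ∈ S.children v, u ∈ TV → (v, u) ∈ TE
  prod_mem : ∀ v ∈ TV, S.kind v = NodeKind.prod → ∀ u ∈ S.children v, u ∈ TV
  prod_edge : ∀ v ∈ TV, S.kind v = NodeKind.prod → ∀ u ∈ S.children v, (v, u) ∈ TE

lemma scope_nonempty (S : SPN V N) (v : V) : (S.scope v).Nonempty := by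
  rw [SPN.scope]
  cases hk : S.kind v with
  | leaf => exact ⟨S.leafVar v, by simp⟩
  | sum =>
      obtain ⟨u, hu⟩ := S.internal_nonempty v (by simp [hk])
      obtain ⟨x, hx⟩ := scope_nonempty S u
      exact ⟨x, Finset.le_sup (f := fun u => S.scope u.1) (Finset.mem_attach _ ⟨u, hu⟩) hx⟩
  | prod =>
      obtain ⟨u, hu⟩ := S.internal_nonempty v (by simp [hk])
      obtain ⟨x, hx⟩ := scope_nonempty S u
      exact ⟨x, Finset.le_sup (f := fun u => S.scope u.1) (Finset.mem_attach _ ⟨u, hu⟩) hx⟩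
termination_by S.rank v
decreasing_by all_goals exact S.rank_lt v u hu

lemma scope_child_subset (S : SPN V N) {v u : V} (hu : u ∈ S.children v) :
    S.scope u ⊆ S.scope v := by
  have hk : S.kind v ≠ NodeKind.leaf := by
    intro h
    rw [S.leaf_children v h] at hu
    exact absurd hu (Finset.notMem_empty u)
  conv_rhs => rw [SPN.scope]
  cases hk' : S.kind v with
  | leaf => exact absurd hk' hk
  | sum => exact Finset.le_sup (f := fun u => S.scope u.1) (Finset.mem_attach _ ⟨u, hu⟩)
  | prod => exact Finset.le_sup (f := fun u => S.scope u.1) (Finset.mem_attach _ ⟨u, hu⟩)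

lemma scope_sum_eq (S : SPN V N) (hC : S.Complete) {v u : V}
    (hk : S.kind v = NodeKind.sum) (hu : u ∈ S.children v) :
    S.scope v = S.scope u := by
  refine le_antisymm ?_ (scope_child_subset S hu)
  conv_lhs => rw [SPN.scope, hk]
  exact Finset.sup_le fun w _ => le_of_eq (hC v hk w.1 w.2 u hu)

lemma scope_prod_eq (S : SPN V N) {v : V} (hk : S.kind v = NodeKind.prod) :
    S.scope v = (S.children v).sup S.scope := by
  conv_lhs => rw [SPN.scope, hk]
  exact Finset.sup_attach _ _

end SPN

/-- If `T = (TV, TE)` is an induced SPN of a complete and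
decomposable SPN `S`, then `T` is a tree (every node of `T` other than the
root of `S` has exactly one parent in `T`), and `T` is itself a complete and
decomposable SPN (completeness and decomposability of `T` are expressed via
any function `scopeT` computing scopes within the subgraph `T`, whose child
relation is given by the edges `TE`). -/
theorem induced_spn_is_tree_complete_decomposable
    {V : Type} [Fintype V] [DecidableEq V] {N : ℕ} (S : SPN V N)
    (hC : S.Complete) (hD : S.Decomposable)
    (TV : Finset V) (TE : Finset (V × V)) (hT : S.IsInducedTree TV TE)
    (scopeT : V → Finset (Fin N))
    (hscope_leaf : ∀ v ∈ TV, S.kind v = NodeKind.leaf → scopeT v = {S.leafVar v})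
    (hscope_int : ∀ v ∈ TV, S.kind v ≠ NodeKind.leaf →
      scopeT v = (Finset.univ.filter fun u => (v, u) ∈ TE).sup scopeT) :
    -- `T` is a tree: every node other than the root has exactly one parent in `T`
    (∀ v ∈ TV, v ≠ S.root → ∃! u, (u, v) ∈ TE) ∧
    -- `T` is complete: all children (in `T`) of any sum node of `T` share the same scope
    (∀ v ∈ TV, S.kind v = NodeKind.sum →
      ∀ u₁, (v, u₁) ∈ TE → ∀ u₂, (v, u₂) ∈ TE → scopeT u₁ = scopeT u₂) ∧
    -- `T` is decomposable: children (in `T`) of any product node of `T` have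
    -- pairwise disjoint scopes
    (∀ v ∈ TV, S.kind v = NodeKind.prod →
      ∀ u₁, (v, u₁) ∈ TE → ∀ u₂, (v, u₂) ∈ TE → u₁ ≠ u₂ →
        Disjoint (scopeT u₁) (scopeT u₂)) := by
  -- edges are S-edges between TV nodes
  have hchild : ∀ {a b : V}, (a, b) ∈ TE → b ∈ S.children a := fun h => (hT.edges_sub _ h).2.2
  have hmem1 : ∀ {a b : V}, (a, b) ∈ TE → a ∈ TV := fun h => (hT.edges_sub _ h).1
  have hmem2 : ∀ {a b : V}, (a, b) ∈ TE → b ∈ TV := fun h => (hT.edges_sub _ h).2.1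
  set R : V → V → Prop := fun a b => (a, b) ∈ TE with hR
  -- rank decreases along edges
  have hrank : ∀ {a b : V}, R a b → S.rank b < S.rank a := fun h => S.rank_lt _ _ (hchild h)
  have hrank_le : ∀ {a b : V}, Relation.ReflTransGen R a b → S.rank b ≤ S.rank a := by
    intro a b h
    induction h with
    | refl => exact le_rfl
    | tail _ h2 ih => exact le_trans (le_of_lt (hrank h2)) ih
  have hscope_le : ∀ {a b : V}, Relation.ReflTransGen R a b → S.scope b ⊆ S.scope a := by
    intro a b h
    induction h with
    | refl => exact subset_rfl
    | tail _ h2 ih => exact subset_trans (SPN.scope_child_subset S (hchild h2)) ih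
  -- the root reaches everything in TV
  have hroot_reach : ∀ v ∈ TV, Relation.ReflTransGen R S.root v := by
    have key : ∀ n v, v ∈ TV → Finset.univ.sup S.rank - S.rank v ≤ n →
        Relation.ReflTransGen R S.root v := by
      intro n
      induction n with
      | zero =>
          intro v hv h0
          rcases eq_or_ne v S.root with rfl | hne
          · exact Relation.ReflTransGen.refl
          · obtain ⟨u, hu⟩ := hT.reach v hv hne
            have h1 : S.rank v < S.rank u := hrank hu
            have h2 : S.rank u ≤ Finset.univ.sup S.rank :=
              Finset.le_sup (Finset.mem_univ u)
            omega
      | succ n ih =>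
          intro v hv h0
          rcases eq_or_ne v S.root with rfl | hne
          · exact Relation.ReflTransGen.refl
          · obtain ⟨u, hu⟩ := hT.reach v hv hne
            have h1 : S.rank v < S.rank u := hrank hu
            have h2 : S.rank u ≤ Finset.univ.sup S.rank :=
              Finset.le_sup (Finset.mem_univ u)
            exact Relation.ReflTransGen.tail (ih u (hmem1 hu) (by omega)) hu
    intro v hv
    exact key _ v hv le_rfl
  -- no cycles through an edge
  have hnocycle : ∀ {p v : V}, (p, v) ∈ TE → Relation.ReflTransGen R v p → False := by
    intro p v h1 h2
    have := hrank_le h2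
    have := hrank h1
    omega
  -- key forking lemma
  have hfork : ∀ n a, a ∈ TV → S.rank a ≤ n → ∀ p₁ p₂ v,
      Relation.ReflTransGen R a p₁ → Relation.ReflTransGen R a p₂ →
      (p₁, v) ∈ TE → (p₂, v) ∈ TE → p₁ = p₂ := by
    intro n
    induction n using Nat.strong_induction_on with
    | _ n ih =>
      intro a ha hn p₁ p₂ v h1 h2 e1 e2
      rcases h1.cases_head with rfl | ⟨b₁, hb₁, h1'⟩
      · rcases h2.cases_head with rfl | ⟨b₂, hb₂, h2'⟩
        · rfl
        · -- a = p₁, a → b₂ ⟶* p₂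
          exfalso
          have hvch : v ∈ S.children a := hchild e1
          have hbch : b₂ ∈ S.children a := hchild hb₂
          rcases eq_or_ne b₂ v with rfl | hne
          · exact hnocycle e2 h2'
          · cases hk : S.kind a with
            | leaf =>
                rw [S.leaf_children a hk] at hvch
                exact absurd hvch (Finset.notMem_empty v)
            | sum =>
                obtain ⟨u, _, huniq⟩ := hT.sum_unique a ha hk
                exact hne (((huniq b₂ ⟨hbch, hmem2 hb₂⟩).trans
                  (huniq v ⟨hvch, hmem2 e1⟩).symm))
            | prod =>
                have hdisj := hD a hk b₂ hbch v hvch hne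
                have hsub : S.scope v ⊆ S.scope b₂ :=
                  subset_trans (SPN.scope_child_subset S (hchild e2)) (hscope_le h2')
                obtain ⟨x, hx⟩ := SPN.scope_nonempty S v
                exact Finset.disjoint_left.mp hdisj (hsub hx) hx
      · rcases h2.cases_head with rfl | ⟨b₂, hb₂, h2'⟩
        · -- symmetric
          exfalso
          have hvch : v ∈ S.children a := hchild e2
          have hbch : b₁ ∈ S.children a := hchild hb₁
          rcases eq_or_ne b₁ v with rfl | hne
          · exact hnocycle e1 h1'
          · cases hk : S.kind a with
            | leaf =>
                rw [S.leaf_children a hk] at hvch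
                exact absurd hvch (Finset.notMem_empty v)
            | sum =>
                obtain ⟨u, _, huniq⟩ := hT.sum_unique a ha hk
                exact hne (((huniq b₁ ⟨hbch, hmem2 hb₁⟩).trans
                  (huniq v ⟨hvch, hmem2 e2⟩).symm))
            | prod =>
                have hdisj := hD a hk b₁ hbch v hvch hne
                have hsub : S.scope v ⊆ S.scope b₁ :=
                  subset_trans (SPN.scope_child_subset S (hchild e1)) (hscope_le h1')
                obtain ⟨x, hx⟩ := SPN.scope_nonempty S v
                exact Finset.disjoint_left.mp hdisj (hsub hx) hx
        · rcases eq_or_ne b₁ b₂ with rfl | hne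
          · exact ih (S.rank b₁) (lt_of_lt_of_le (hrank hb₁) hn) b₁ (hmem2 hb₁) le_rfl
              p₁ p₂ v h1' h2' e1 e2
          · exfalso
            cases hk : S.kind a with
            | leaf =>
                have := hchild hb₁
                rw [S.leaf_children a hk] at this
                exact absurd this (Finset.notMem_empty b₁)
            | sum =>
                obtain ⟨u, _, huniq⟩ := hT.sum_unique a ha hk
                exact hne (((huniq b₁ ⟨hchild hb₁, hmem2 hb₁⟩).trans
                  (huniq b₂ ⟨hchild hb₂, hmem2 hb₂⟩).symm))
            | prod =>
                have hdisj := hD a hk b₁ (hchild hb₁) b₂ (hchild hb₂) hne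
                have hsub1 : S.scope v ⊆ S.scope b₁ :=
                  subset_trans (SPN.scope_child_subset S (hchild e1)) (hscope_le h1')
                have hsub2 : S.scope v ⊆ S.scope b₂ :=
                  subset_trans (SPN.scope_child_subset S (hchild e2)) (hscope_le h2')
                obtain ⟨x, hx⟩ := SPN.scope_nonempty S v
                exact Finset.disjoint_left.mp hdisj (hsub1 hx) (hsub2 hx)
  refine ⟨?_, ?_, ?_⟩
  · intro v hv hne
    obtain ⟨u, hu⟩ := hT.reach v hv hne
    exact ⟨u, hu, fun u' hu' => hfork (S.rank S.root) S.root hT.root_mem le_rfl u' u v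
      (hroot_reach u' (hmem1 hu')) (hroot_reach u (hmem1 hu)) hu' hu⟩
  · intro v hv hk u₁ h1 u₂ h2
    obtain ⟨u, _, huniq⟩ := hT.sum_unique v hv hk
    rw [((huniq u₁ ⟨hchild h1, hmem2 h1⟩).trans (huniq u₂ ⟨hchild h2, hmem2 h2⟩).symm)]
  · -- decomposability: need scopeT = S.scope on TV
    have hscopeT : ∀ n v, v ∈ TV → S.rank v ≤ n → scopeT v = S.scope v := by
      intro n
      induction n using Nat.strong_induction_on with
      | _ n ih =>
        intro v hv hn
        cases hk : S.kind v with
        | leaf =>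
            rw [hscope_leaf v hv hk, SPN.scope, hk]
        | sum =>
            obtain ⟨u, ⟨hu1, hu2⟩, huniq⟩ := hT.sum_unique v hv hk
            have hfe : (Finset.univ.filter fun w => (v, w) ∈ TE) = {u} := by
              ext w
              simp only [Finset.mem_filter, Finset.mem_univ, true_and, Finset.mem_singleton]
              constructor
              · intro hw
                exact huniq w ⟨hchild hw, hmem2 hw⟩
              · intro hw
                rw [hw]
                exact hT.sum_edge v hv hk u hu1 hu2
            rw [hscope_int v hv (by simp [hk]), hfe, Finset.sup_singleton,
              ih (S.rank u) (lt_of_lt_of_le (S.rank_lt v u hu1) hn) u hu2 le_rfl,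
              SPN.scope_sum_eq S hC hk hu1]
        | prod =>
            have hfe : (Finset.univ.filter fun w => (v, w) ∈ TE) = S.children v := by
              ext w
              simp only [Finset.mem_filter, Finset.mem_univ, true_and]
              exact ⟨fun hw => hchild hw, fun hw => hT.prod_edge v hv hk w hw⟩
            rw [hscope_int v hv (by simp [hk]), hfe, SPN.scope_prod_eq S hk]
            exact Finset.sup_congr rfl fun w hw =>
              ih (S.rank w) (lt_of_lt_of_le (S.rank_lt v w hw) hn) w
                (hT.prod_mem v hv hk w hw) le_rfl
    intro v hv hk u₁ h1 u₂ h2 hne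
    rw [hscopeT (S.rank u₁) u₁ (hmem2 h1) le_rfl, hscopeT (S.rank u₂) u₂ (hmem2 h2) le_rfl]
    exact hD v hk u₁ (hchild h1) u₂ (hchild h2) hne
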